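/- arXiv:2204.11912 — 2 statements merged into one kernel-verified Lean document; each statement's English description precedes it below -/
import Mathlib

section
/- Let Ω ⊂ ℝ^d be an open set, ρ ∈ L¹(Ω) with 0 ≤ ρ ≤ 1 a.e., and T : Ω → Ω a Borel map with Jacobian DT(x) positive definite a.e. such that ρ(x)/|det DT(x)| ≤ 1 a.e. (i.e. the pushforward density of ρ under T is at most 1). For t ∈ [0,1] set T_t(x) = (1-t)x + t·T(x). Then the pushforward density ρ_t of ρ under T_t satisfies ρ_t ≤ 1 a.e.; the key pointwise inequality is 1/|det((1-t)I + t·DT(x))| ≤ (1-t) + t/|det DT(x)| for a.e. x. -/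
/-!
Diagonalising `DT(x)` with eigenvalues `λᵢ > 0`, the weighted AM–GM inequality
`λ ^ t ≤ (1 - t) + t λ` applied to each factor gives `det DT(x) ^ t ≤ det((1 - t) I + t DT(x))`,
and applied once more to `1 / det DT(x)` it gives
`1 / det((1 - t) I + t DT(x)) ≤ (1 / det DT(x)) ^ t ≤ (1 - t) + t / det DT(x)`.
Multiplying by `ρ(x)` bounds `ρ_t` by the convex combination `(1 - t) ρ + t ρ / det DT ≤ 1`.
-/

open MeasureTheory Matrix

theorem Real.rpow_le_one_sub_add_mul {x t : ℝ} (hx : 0 ≤ x) (ht0 : 0 ≤ t) (ht1 : t ≤ 1) :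
    x ^ t ≤ (1 - t) + t * x := by
  have h := rpow_one_add_le_one_add_mul_self (s := x - 1) (by linarith) ht0 ht1
  rw [add_sub_cancel] at h
  linarith

theorem Matrix.IsHermitian.det_smul_one_add_smul {n : Type*} [Fintype n] [DecidableEq n]
    {A : Matrix n n ℝ} (hA : A.IsHermitian) (a b : ℝ) :
    (a • 1 + b • A).det = ∏ i, (a + b * hA.eigenvalues i) := by
  set U := hA.eigenvectorUnitary
  have hdiag : a • 1 + b • diagonal (RCLike.ofReal ∘ hA.eigenvalues) =
      diagonal fun i => a + b * hA.eigenvalues i := by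
    rw [smul_one_eq_diagonal, ← diagonal_smul, diagonal_add]; rfl
  conv_lhs => rw [hA.spectral_theorem, ← map_one (Unitary.conjStarAlgAut ℝ _ U), ← map_smul,
    ← map_smul, ← map_add, hdiag, Unitary.conjStarAlgAut_apply, det_mul_comm, ← mul_assoc,
    Unitary.star_mul_self_of_mem U.2, one_mul, det_diagonal]

namespace Matrix.PosDef

variable {n : Type*} [Fintype n] [DecidableEq n] {A : Matrix n n ℝ} {t : ℝ}

theorem det_rpow_le_det_one_sub_smul_one_add_smul (hA : A.PosDef) (ht0 : 0 ≤ t) (ht1 : t ≤ 1) :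
    A.det ^ t ≤ ((1 - t) • (1 : Matrix n n ℝ) + t • A).det := by
  have hev i : 0 ≤ hA.isHermitian.eigenvalues i := (hA.eigenvalues_pos i).le
  rw [hA.isHermitian.det_smul_one_add_smul, hA.isHermitian.det_eq_prod_eigenvalues]
  simp only [RCLike.ofReal_real_eq_id, id_eq]
  rw [← Real.finsetProd_rpow _ _ fun i _ => hev i]
  exact Finset.prod_le_prod (fun i _ => Real.rpow_nonneg (hev i) t)
    fun i _ => Real.rpow_le_one_sub_add_mul (hev i) ht0 ht1

theorem one_div_abs_det_one_sub_smul_one_add_smul_le (hA : A.PosDef) (ht0 : 0 ≤ t)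
    (ht1 : t ≤ 1) :
    1 / |((1 - t) • (1 : Matrix n n ℝ) + t • A).det| ≤ (1 - t) + t / |A.det| := by
  have hdet := hA.det_pos
  have hpow : 0 < A.det ^ t := Real.rpow_pos_of_pos hdet t
  have hge := hA.det_rpow_le_det_one_sub_smul_one_add_smul ht0 ht1
  rw [abs_of_pos (hpow.trans_le hge), abs_of_pos hdet]
  calc 1 / ((1 - t) • (1 : Matrix n n ℝ) + t • A).det
      ≤ 1 / A.det ^ t := one_div_le_one_div_of_le hpow hge
    _ = (1 / A.det) ^ t := by rw [Real.div_rpow zero_le_one hdet.le, Real.one_rpow]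
    _ ≤ (1 - t) + t * (1 / A.det) :=
        Real.rpow_le_one_sub_add_mul (one_div_nonneg.mpr hdet.le) ht0 ht1
    _ = (1 - t) + t / A.det := by rw [mul_one_div]

end Matrix.PosDef

theorem stmt_3_general {d : ℕ} (Ω : Set (EuclideanSpace ℝ (Fin d)))
    (ρ : EuclideanSpace ℝ (Fin d) → ℝ)
    (DT : EuclideanSpace ℝ (Fin d) → Matrix (Fin d) (Fin d) ℝ)
    (hρ : ∀ᵐ x ∂(volume.restrict Ω), 0 ≤ ρ x ∧ ρ x ≤ 1)
    (hDT : ∀ᵐ x ∂(volume.restrict Ω), (DT x).PosDef)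
    (hpush : ∀ᵐ x ∂(volume.restrict Ω), ρ x / |(DT x).det| ≤ 1)
    (t : ℝ) (ht : t ∈ Set.Icc (0:ℝ) 1) :
    (∀ᵐ x ∂(volume.restrict Ω),
      1 / |((1 - t) • (1 : Matrix (Fin d) (Fin d) ℝ) + t • DT x).det| ≤
        (1 - t) + t / |(DT x).det|) ∧
    (∀ᵐ x ∂(volume.restrict Ω),
      ρ x / |((1 - t) • (1 : Matrix (Fin d) (Fin d) ℝ) + t • DT x).det| ≤ 1) := by
  obtain ⟨ht0, ht1⟩ := ht
  have hkey : ∀ᵐ x ∂(volume.restrict Ω),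
      1 / |((1 - t) • (1 : Matrix (Fin d) (Fin d) ℝ) + t • DT x).det| ≤
        (1 - t) + t / |(DT x).det| := by
    filter_upwards [hDT] with x hA
    exact hA.one_div_abs_det_one_sub_smul_one_add_smul_le ht0 ht1
  refine ⟨hkey, ?_⟩
  filter_upwards [hρ, hpush, hkey] with x ⟨hρ0, hρ1⟩ hρT hx
  calc ρ x / |((1 - t) • (1 : Matrix (Fin d) (Fin d) ℝ) + t • DT x).det|
      = ρ x * (1 / |((1 - t) • (1 : Matrix (Fin d) (Fin d) ℝ) + t • DT x).det|) := by
        rw [mul_one_div]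
    _ ≤ ρ x * ((1 - t) + t / |(DT x).det|) := mul_le_mul_of_nonneg_left hx hρ0
    _ = (1 - t) * ρ x + t * (ρ x / |(DT x).det|) := by ring
    _ ≤ (1 - t) * 1 + t * 1 := by gcongr
    _ = 1 := by ring

/-- McCann interpolation preserves the bound `ρ ≤ 1`: if `ρ(x)/|det DT(x)| ≤ 1` a.e.
and `0 ≤ ρ ≤ 1` a.e., then the interpolated density
`ρ_t(T_t x) = ρ(x)/|det((1-t)I + t DT(x))|` is at most `1` a.e., the key pointwise
inequality being `1/|det((1-t)I + t DT(x))| ≤ (1-t) + t/|det DT(x)|`. -/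
theorem stmt_3 {d : ℕ} (Ω : Set (EuclideanSpace ℝ (Fin d))) (hΩ : IsOpen Ω)
    (ρ : EuclideanSpace ℝ (Fin d) → ℝ)
    (hρint : Integrable ρ (volume.restrict Ω))
    (DT : EuclideanSpace ℝ (Fin d) → Matrix (Fin d) (Fin d) ℝ)
    (hρ : ∀ᵐ x ∂(volume.restrict Ω), 0 ≤ ρ x ∧ ρ x ≤ 1)
    (hDT : ∀ᵐ x ∂(volume.restrict Ω), (DT x).PosDef)
    (hpush : ∀ᵐ x ∂(volume.restrict Ω), ρ x / |(DT x).det| ≤ 1)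
    (t : ℝ) (ht : t ∈ Set.Icc (0:ℝ) 1) :
    (∀ᵐ x ∂(volume.restrict Ω),
      1 / |((1 - t) • (1 : Matrix (Fin d) (Fin d) ℝ) + t • DT x).det| ≤
        (1 - t) + t / |(DT x).det|) ∧
    (∀ᵐ x ∂(volume.restrict Ω),
      ρ x / |((1 - t) • (1 : Matrix (Fin d) (Fin d) ℝ) + t • DT x).det| ≤ 1) :=
  stmt_3_general Ω ρ DT hρ hDT hpush t ht
end

section
/- The map M ↦ (det M)^{-1} is convex on the cone of symmetric positive definite d×d real matrices: for all symmetric positive definite A, B and t ∈ [0,1], (det((1-t)A + tB))^{-1} ≤ (1-t)(det A)^{-1} + t(det B)^{-1}. -/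
/-!
Writing `A = S²` with `S = √A` and `M = S⁻¹ B S⁻¹ ⪰ 0`, one has
`(1 - t) A + t B = S ((1 - t) 1 + t M) S`, and the eigenvalues of `(1 - t) 1 + t M` are
`(1 - t) + t μᵢ ≥ μᵢ ^ t` (weighted AM-GM), where `μᵢ` are those of `M`. Taking the product gives
log-concavity `det A ^ (1 - t) * det B ^ t ≤ det ((1 - t) A + t B)`; inverting and applying
weighted AM-GM once more to `det A⁻¹` and `det B⁻¹` gives the convexity of `(det ·)⁻¹`.
-/

open Matrix MatrixOrder

section

variable {n : Type*} [Fintype n] [DecidableEq n]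

theorem Matrix.IsHermitian.det_cfc {𝕜 : Type*} [RCLike 𝕜] {A : Matrix n n 𝕜}
    (hA : A.IsHermitian) (f : ℝ → ℝ) :
    (cfc f A).det = ∏ i, (f (hA.eigenvalues i) : 𝕜) := by
  rw [hA.cfc_eq, IsHermitian.cfc, Unitary.conjStarAlgAut_apply,
    det_conj_of_mul_eq_one (Unitary.coe_mul_star_self _) (Unitary.coe_star_mul_self _), det_diagonal]
  rfl

theorem Matrix.PosSemidef.det_rpow_le_det_one_sub_smul_add_smul {M : Matrix n n ℝ}
    (hM : M.PosSemidef) {t : ℝ} (ht0 : 0 ≤ t) (ht1 : t ≤ 1) :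
    M.det ^ t ≤ ((1 - t) • 1 + t • M).det := by
  have hcfc : cfc (fun x => (1 - t) + t * x) M = (1 - t) • 1 + t • M := by
    rw [cfc_add .., cfc_const_mul .., cfc_const .., cfc_id' ..]
    simp [Algebra.algebraMap_eq_smul_one]
  rw [← hcfc, hM.isHermitian.det_cfc, hM.isHermitian.det_eq_prod_eigenvalues]
  simp only [RCLike.ofReal_real_eq_id, id]
  rw [← Real.finsetProd_rpow _ _ fun i _ => hM.eigenvalues_nonneg i]
  refine Finset.prod_le_prod (fun i _ => Real.rpow_nonneg (hM.eigenvalues_nonneg i) t) fun i _ => ?_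
  simpa using Real.geom_mean_le_arith_mean2_weighted (by linarith) ht0 zero_le_one
    (hM.eigenvalues_nonneg i) (by ring)

theorem Matrix.PosDef.det_rpow_mul_det_rpow_le {A B : Matrix n n ℝ} (hA : A.PosDef)
    (hB : B.PosSemidef) {t : ℝ} (ht0 : 0 ≤ t) (ht1 : t ≤ 1) :
    A.det ^ (1 - t) * B.det ^ t ≤ ((1 - t) • A + t • B).det := by
  set S := CFC.sqrt A
  have hS : S.IsHermitian := (CFC.sqrt_nonneg A).posSemidef.isHermitian
  have hSS : S * S = A := CFC.sqrt_mul_sqrt_self A hA.posSemidef.nonneg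
  have hS_unit : IsUnit S.det := by
    refine isUnit_of_mul_isUnit_left (y := S.det) ?_
    rw [← det_mul, hSS]
    exact hA.det_pos.ne'.isUnit
  set M := S⁻¹ * B * S⁻¹
  have hM : M.PosSemidef := by
    simpa only [hS.inv.eq] using hB.conjTranspose_mul_mul_same S⁻¹
  have hSMS : S * M * S = B := by
    simp only [M, ← Matrix.mul_assoc, mul_nonsing_inv S hS_unit, Matrix.one_mul]
    rw [Matrix.mul_assoc, nonsing_inv_mul S hS_unit, Matrix.mul_one]
  have det_conj (X : Matrix n n ℝ) : (S * X * S).det = A.det * X.det := by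
    rw [← hSS, det_mul, det_mul, det_mul]; ring
  have hA0 := hA.det_pos
  calc A.det ^ (1 - t) * B.det ^ t = A.det * M.det ^ t := by
        rw [← hSMS, det_conj, Real.mul_rpow hA0.le hM.det_nonneg, ← mul_assoc,
          ← Real.rpow_add hA0, sub_add_cancel, Real.rpow_one]
    _ ≤ A.det * ((1 - t) • 1 + t • M).det := by
        gcongr
        exact hM.det_rpow_le_det_one_sub_smul_add_smul ht0 ht1
    _ = ((1 - t) • A + t • B).det := by
        rw [← det_conj, ← hSS, ← hSMS]
        simp only [Matrix.mul_add, Matrix.add_mul, Matrix.mul_smul, Matrix.smul_mul,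
          Matrix.mul_one, Matrix.mul_assoc]

end

/-- Convexity of `M ↦ (det M)⁻¹` on symmetric positive definite matrices:
for `A, B` positive definite and `t ∈ [0,1]`,
`(det((1-t)A + tB))⁻¹ ≤ (1-t)(det A)⁻¹ + t(det B)⁻¹`. -/
theorem stmt_4 {d : ℕ} (A B : Matrix (Fin d) (Fin d) ℝ)
    (hA : A.PosDef) (hB : B.PosDef) (t : ℝ) (ht : t ∈ Set.Icc (0:ℝ) 1) :
    (((1 - t) • A + t • B).det)⁻¹ ≤ (1 - t) * (A.det)⁻¹ + t * (B.det)⁻¹ := by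
  obtain ⟨ht0, ht1⟩ := ht
  have ha := hA.det_pos
  have hb := hB.det_pos
  calc (((1 - t) • A + t • B).det)⁻¹ ≤ (A.det ^ (1 - t) * B.det ^ t)⁻¹ :=
        inv_anti₀ (by positivity) (hA.det_rpow_mul_det_rpow_le hB.posSemidef ht0 ht1)
    _ = A.det⁻¹ ^ (1 - t) * B.det⁻¹ ^ t := by
        rw [mul_inv, Real.inv_rpow ha.le, Real.inv_rpow hb.le]
    _ ≤ (1 - t) * A.det⁻¹ + t * B.det⁻¹ :=
        Real.geom_mean_le_arith_mean2_weighted (by linarith) ht0 (inv_nonneg.mpr ha.le)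
          (inv_nonneg.mpr hb.le) (by ring)
end
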